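/- Let T' be a rooted tree with leaf set Lv(T'), let ℓ be a non-root leaf of T', and let m ≥ 2. Let T be the rooted tree obtained from T' by attaching m new leaves l_1,…,l_m as children of ℓ, so that ℓ becomes an internal vertex of T of out-degree m and Lv(T) = (Lv(T') ∖ {ℓ}) ∪ {l_1,…,l_m}. Let ψ be the ℂ-algebra homomorphism from ℂ[p_ij : {i,j} a 2-element subset of Lv(T)] to the polynomial ring ℂ[s_⋆, s_e (e ∈ E(T')), u_⋆, u_0, u_1, …, u_m] defined by: ψ(p_ij) = s_⋆·u_⋆·∏_{e ∈ P_{T'}(i,j)} s_e for i,j ∈ Lv(T') ∖ {ℓ}; ψ(p_{l_α l_β}) = s_⋆·u_⋆·u_α·u_β for 1 ≤ α < β ≤ m; and ψ(p_{i,l_α}) = s_⋆·u_⋆·u_0·u_α·∏_{e ∈ P_{T'}(i,ℓ)} s_e for i ∈ Lv(T') ∖ {ℓ} and 1 ≤ α ≤ m. Then ker ψ = ker φ_{B_T}. (This expresses the toric ideal I(B_T) as the toric fiber product of the toric ideals I(B*_{T'}) and I(B*_{S_m}), where S_m is the star tree on m+1 leaves glued to T' along the edge into ℓ.) -/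

import Mathlib

attribute [local instance] Classical.propDecidable

/-- A rooted tree whose leaves are labeled by a set `L` containing a distinguished
root leaf, with all edges directed away from the root and no vertices of degree two.
The parent map `par` sends every non-root vertex to the vertex its unique incoming edge
comes from, and fixes the root.  A vertex `u` is a descendant of a vertex `v` iff some
iterate of `par` sends `u` to `v`. -/
structure RTree (L : Type) where
  V : Type
  fintypeV : Fintype V
  leaf : L ↪ V
  root : L
  par : V → V
  par_root : par (leaf root) = leaf root
  par_ne : ∀ v : V, v ≠ leaf root → par v ≠ v
  reaches_root : ∀ v : V, ∃ k : ℕ, par^[k] v = leaf root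
  leaf_iff : ∀ v : V, v ≠ leaf root → (v ∈ Set.range leaf ↔ ∀ u, par u ≠ v)
  root_unique_child : ∃! u : V, u ≠ leaf root ∧ par u = leaf root
  no_degree_two : ∀ v : V, v ∉ Set.range leaf → ∃ u w : V, u ≠ w ∧ par u = v ∧ par w = v

instance {L : Type} (T : RTree L) : Fintype T.V := T.fintypeV

/-- `T.isAnc v u` : `v` is an ancestor of `u`, i.e. `u` is a descendant of `v`. -/
def RTree.isAnc {L : Type} (T : RTree L) (v u : T.V) : Prop := ∃ k : ℕ, T.par^[k] u = v

/-- The non-root vertices of `T`; these are in bijection `v ↦ e(v)` with the edges of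
`T` via the unique incoming edge, and index the rows of `B_T`. -/
abbrev RTree.NR {L : Type} (T : RTree L) := {v : T.V // v ≠ T.leaf T.root}

/-- `T.onPath v i j` : the edge `e(v)` lies on the unique path `P(i,j)` between the
distinct leaves `i` and `j`, i.e. exactly one of `i`, `j` is a descendant of `v`. -/
def RTree.onPath {L : Type} (T : RTree L) (v : T.V) (i j : L) : Prop :=
  Xor' (T.isAnc v (T.leaf i)) (T.isAnc v (T.leaf j))

/-- The 2-element subsets of `L`, i.e. the non-diagonal unordered pairs. -/
abbrev Pairs (L : Type) := {s : Sym2 L // ¬ s.IsDiag}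

/-- The matrix `B_T`, with rows indexed by the edges `e(v)` of `T` (equivalently, by the
non-root vertices `v`) and columns indexed by 2-element subsets `{i,j}` of the leaf set:
the entry is `1` if `e(v) ∈ P(i,j)` and `0` otherwise. -/
noncomputable def BmatS {L : Type} (T : RTree L) : Matrix T.NR (Pairs L) ℕ :=
  Matrix.of fun v s => if ∃ i j : L, s.1 = s(i, j) ∧ T.onPath v.1 i j then 1 else 0

/-- The monomial map `φ_M` associated to a nonnegative-integer matrix `M`, sending
`p_c` to `∏_r t_r ^ M(r,c)`. -/
noncomputable def toricMap {R C : Type*} [Fintype R] (M : Matrix R C ℕ) :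
    MvPolynomial C ℂ →ₐ[ℂ] MvPolynomial R ℂ :=
  MvPolynomial.aeval fun c => ∏ r : R, MvPolynomial.X r ^ M r c

/-- The leaf label set `Lv(T) = (Lv(T') ∖ {ℓ}) ∪ {l_1, …, l_m}` of the tree obtained
from a tree with leaf label set `L'` by attaching `m` new leaves `l_1, …, l_m` (the
elements of `Fin m`) below the leaf `ℓ`. -/
abbrev NewLabels (L' : Type) (ℓ : L') (m : ℕ) := {x : L' // x ≠ ℓ} ⊕ Fin m

namespace AttachAux

variable {L' : Type} (T' : RTree L') (ℓ : L') (m : ℕ)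

/-- The parent map of the enlarged tree: old vertices keep their parent, and each new
leaf `l_α` has the old vertex of `ℓ` as its parent. -/
def newPar : T'.V ⊕ Fin m → T'.V ⊕ Fin m :=
  Sum.elim (fun w => Sum.inl (T'.par w)) (fun _ => Sum.inl (T'.leaf ℓ))

/-- The leaf labeling of the enlarged tree. -/
def newLeaf : NewLabels L' ℓ m → T'.V ⊕ Fin m :=
  Sum.elim (fun y => Sum.inl (T'.leaf y.1)) (fun α => Sum.inr α)

lemma newLeaf_inj : Function.Injective (newLeaf T' ℓ m) := by
  rintro (x | α) (y | β) h
  · simp only [newLeaf, Sum.elim_inl, Sum.inl.injEq] at h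
    exact congrArg Sum.inl (Subtype.ext (T'.leaf.injective h))
  · exact absurd h (by simp [newLeaf])
  · exact absurd h (by simp [newLeaf])
  · simp only [newLeaf, Sum.elim_inr, Sum.inr.injEq] at h
    exact congrArg Sum.inr h

lemma newPar_iter (k : ℕ) (w : T'.V) :
    (newPar T' ℓ m)^[k] (Sum.inl w) = Sum.inl (T'.par^[k] w) := by
  induction k with
  | zero => rfl
  | succ k ih =>
      rw [Function.iterate_succ_apply', ih, Function.iterate_succ_apply']
      rfl

end AttachAux

/-- The rooted tree `T` obtained from `T'` by attaching `m ≥ 2` new leaves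
`l_1, …, l_m` as children of the (non-root) leaf `ℓ` of `T'`, so that the vertex of `ℓ`
becomes an internal vertex of `T` of out-degree `m` and
`Lv(T) = (Lv(T') ∖ {ℓ}) ∪ {l_1, …, l_m}`. -/
noncomputable def attachStar {L' : Type} (T' : RTree L') (ℓ : L') (hℓ : ℓ ≠ T'.root)
    (m : ℕ) (hm : 2 ≤ m) : RTree (NewLabels L' ℓ m) where
  V := T'.V ⊕ Fin m
  fintypeV := inferInstance
  leaf := ⟨AttachAux.newLeaf T' ℓ m, AttachAux.newLeaf_inj T' ℓ m⟩
  root := Sum.inl ⟨T'.root, Ne.symm hℓ⟩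
  par := AttachAux.newPar T' ℓ m
  par_root := by
    show AttachAux.newPar T' ℓ m (Sum.inl (T'.leaf T'.root)) = Sum.inl (T'.leaf T'.root)
    simp [AttachAux.newPar, T'.par_root]
  par_ne := by
    rintro (w | α) hv
    · have hw : w ≠ T'.leaf T'.root := fun h => hv (by simp [AttachAux.newLeaf, h])
      simpa [AttachAux.newPar] using T'.par_ne w hw
    · simp [AttachAux.newPar]
  reaches_root := by
    rintro (w | α)
    · obtain ⟨k, hk⟩ := T'.reaches_root w
      exact ⟨k, by rw [AttachAux.newPar_iter, hk]; rfl⟩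
    · obtain ⟨k, hk⟩ := T'.reaches_root (T'.leaf ℓ)
      refine ⟨k + 1, ?_⟩
      rw [Function.iterate_succ_apply]
      show (AttachAux.newPar T' ℓ m)^[k] (Sum.inl (T'.leaf ℓ)) = _
      rw [AttachAux.newPar_iter, hk]; rfl
  leaf_iff := by
    rintro (w | α) hv
    · have hw : w ≠ T'.leaf T'.root := fun h => hv (by simp [AttachAux.newLeaf, h])
      constructor
      · rintro ⟨lab, hlab⟩
        rcases lab with y | α
        · simp only [Function.Embedding.coeFn_mk, AttachAux.newLeaf, Sum.elim_inl,
            Sum.inl.injEq] at hlab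
          rintro (u | β)
          · have := (T'.leaf_iff w hw).mp ⟨y.1, hlab⟩ u
            simpa [AttachAux.newPar] using this
          · have : T'.leaf ℓ ≠ w :=
              fun h => y.2 (T'.leaf.injective (hlab.trans h.symm))
            simpa [AttachAux.newPar] using this
        · exact absurd hlab (by simp [AttachAux.newLeaf])
      · intro h
        have h1 : ∀ u, T'.par u ≠ w := fun u hu => h (Sum.inl u) (by simp [AttachAux.newPar, hu])
        obtain ⟨y, hy⟩ := (T'.leaf_iff w hw).mpr h1
        have hyl : y ≠ ℓ := by
          rintro rfl
          exact h (Sum.inr ⟨0, by omega⟩)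
            (by simp only [AttachAux.newPar, Sum.elim_inr, hy])
        exact ⟨Sum.inl ⟨y, hyl⟩, by simp [AttachAux.newLeaf, hy]⟩
    · refine iff_of_true ⟨Sum.inr α, rfl⟩ ?_
      rintro (u | β) <;> simp [AttachAux.newPar]
  root_unique_child := by
    obtain ⟨u', ⟨hu1, hu2⟩, huniq⟩ := T'.root_unique_child
    refine ⟨Sum.inl u', ⟨?_, ?_⟩, ?_⟩
    · exact fun h => hu1 (by simpa [AttachAux.newLeaf] using h)
    · show AttachAux.newPar T' ℓ m (Sum.inl u') = Sum.inl (T'.leaf T'.root)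
      simp [AttachAux.newPar, hu2]
    · rintro (w | α) ⟨h1, h2⟩
      · have hw1 : w ≠ T'.leaf T'.root := fun h => h1 (by simp [AttachAux.newLeaf, h])
        have hw2 : T'.par w = T'.leaf T'.root := by
          simpa [AttachAux.newPar, AttachAux.newLeaf] using h2
        exact congrArg Sum.inl (huniq w ⟨hw1, hw2⟩)
      · exfalso
        have : T'.leaf ℓ = T'.leaf T'.root := by
          simpa [AttachAux.newPar, AttachAux.newLeaf] using h2
        exact hℓ (T'.leaf.injective this)
  no_degree_two := by
    rintro (w | α) hv
    · by_cases hwl : w = T'.leaf ℓ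
      · refine ⟨Sum.inr ⟨0, by omega⟩, Sum.inr ⟨1, by omega⟩, by simp, ?_, ?_⟩
        · simp [AttachAux.newPar, hwl]
        · simp [AttachAux.newPar, hwl]
      · have hw : w ∉ Set.range T'.leaf := by
          rintro ⟨y, hy⟩
          have hyl : y ≠ ℓ := fun h => hwl (h ▸ hy).symm
          exact hv ⟨Sum.inl ⟨y, hyl⟩, by simp [AttachAux.newLeaf, hy]⟩
        obtain ⟨u, u', huu, hu, hu'⟩ := T'.no_degree_two w hw
        exact ⟨Sum.inl u, Sum.inl u', by simp [huu], by simp [AttachAux.newPar, hu],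
          by simp [AttachAux.newPar, hu']⟩
    · exact absurd ⟨Sum.inr α, rfl⟩ hv

/-- The variables `s_⋆, s_e (e ∈ E(T')), u_⋆, u_0, u_1, …, u_m` of the target ring of
`ψ` : `Sum.inl none = s_⋆`, `Sum.inl (some e) = s_e`, `Sum.inr none = u_⋆`,
`Sum.inr (some 0) = u_0` (the edge of the star below `ℓ`), and
`Sum.inr (some α.succ) = u_α` (the edge into the new leaf `l_α`, for `α ∈ Fin m`). -/
abbrev PsiVars {L' : Type} (T' : RTree L') (m : ℕ) := Option T'.NR ⊕ Option (Fin (m + 1))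

/-- The exponent matrix of the monomial map `ψ`: for a column `{i,j}` (a 2-element
subset of the leaves of `T`), the corresponding monomial is
`ψ(p_ij) = s_⋆ · u_⋆ · ∏_{e ∈ P_{T'}(i,j)} s_e` if `i, j ∈ Lv(T') ∖ {ℓ}`;
`ψ(p_{l_α l_β}) = s_⋆ · u_⋆ · u_α · u_β` for `1 ≤ α < β ≤ m`; and
`ψ(p_{i,l_α}) = s_⋆ · u_⋆ · u_0 · u_α · ∏_{e ∈ P_{T'}(i,ℓ)} s_e` for
`i ∈ Lv(T') ∖ {ℓ}` and `1 ≤ α ≤ m`. -/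
noncomputable def psiMat {L' : Type} (T' : RTree L') (ℓ : L') (m : ℕ) :
    Matrix (PsiVars T' m) (Pairs (NewLabels L' ℓ m)) ℕ :=
  Matrix.of fun r s =>
    match r with
    | Sum.inl none => 1
    | Sum.inl (some e) =>
        if (∃ x y : {x : L' // x ≠ ℓ}, s.1 = s(Sum.inl x, Sum.inl y) ∧ T'.onPath e.1 x.1 y.1)
            ∨ (∃ (x : {x : L' // x ≠ ℓ}) (α : Fin m),
                s.1 = s(Sum.inl x, Sum.inr α) ∧ T'.onPath e.1 x.1 ℓ)
          then 1 else 0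
    | Sum.inr none => 1
    | Sum.inr (some β) =>
        if β = 0 then
          (if (∃ x : {x : L' // x ≠ ℓ}, (Sum.inl x : NewLabels L' ℓ m) ∈ s.1)
              ∧ (∃ α : Fin m, (Sum.inr α : NewLabels L' ℓ m) ∈ s.1) then 1 else 0)
        else
          (if ∃ α : Fin m, β = α.succ ∧ (Sum.inr α : NewLabels L' ℓ m) ∈ s.1 then 1 else 0)


/-!
The kernel of a monomial map only depends on which monomials it identifies, and the fibres of
`d ↦ M d` only depend on the rational row space of `M`. So it suffices to show that the exponent
matrices of `ψ` and of `φ_{B_T}` have the same rational row space. Every row of `B_T` is a row of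
`ψ`: the edge of `T'` into `v` gives `s_v` and the edge into `l_α` gives `u_α`; moreover `u_0` is
the row of the edge into `ℓ`. The only rows of `ψ` left are the constant rows `s_⋆` and `u_⋆`, and
twice the constant row is a combination of rows of `B_T`: weight every edge by the number of its
endpoints that are leaves, since a path between two leaves meets exactly two of them.
-/

open MvPolynomial

section Toric

variable {R R' C : Type*} [Fintype R] [Fintype R']

noncomputable def toricExp (M : Matrix R C ℕ) (d : C →₀ ℕ) : R →₀ ℕ :=
  Finsupp.equivFunOnFinite.symm fun r => d.sum fun c n => n * M r c

lemma toricExp_apply (M : Matrix R C ℕ) (d : C →₀ ℕ) (r : R) :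
    toricExp M d r = d.sum fun c n => n * M r c := rfl

lemma toricMap_monomial (M : Matrix R C ℕ) (d : C →₀ ℕ) (a : ℂ) :
    toricMap M (monomial d a) = monomial (toricExp M d) a := by
  rw [toricMap, aeval_monomial, monomial_eq]
  congr 1
  rw [Finsupp.prod_fintype (toricExp M d) _ fun r => pow_zero _]
  simp only [Finsupp.prod, ← Finset.prod_pow, ← pow_mul]
  rw [Finset.prod_comm]
  refine Finset.prod_congr rfl fun r _ => ?_
  rw [Finset.prod_pow_eq_pow_sum, toricExp_apply, Finsupp.sum]
  simp only [mul_comm]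

lemma coeff_toricMap (M : Matrix R C ℕ) (f : MvPolynomial C ℂ) (w : R →₀ ℕ) :
    coeff w (toricMap M f) = ∑ d ∈ f.support with toricExp M d = w, coeff d f := by
  conv_lhs => rw [f.as_sum]
  simp only [map_sum, toricMap_monomial, coeff_sum, coeff_monomial]
  rw [Finset.sum_filter]

lemma mem_ker_toricMap_iff (M : Matrix R C ℕ) (f : MvPolynomial C ℂ) :
    f ∈ RingHom.ker (toricMap M) ↔
      ∀ d₀, ∑ d ∈ f.support with toricExp M d = toricExp M d₀, coeff d f = 0 := by
  rw [RingHom.mem_ker]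
  refine ⟨fun h d₀ => by rw [← coeff_toricMap, h, coeff_zero], fun h => ?_⟩
  ext w
  rw [coeff_toricMap, coeff_zero]
  by_cases hw : ∃ d₀ ∈ f.support, toricExp M d₀ = w
  · obtain ⟨d₀, -, rfl⟩ := hw
    exact h d₀
  · exact Finset.sum_eq_zero fun d hd => (hw ⟨d, Finset.mem_filter.mp hd⟩).elim

lemma ker_toricMap_eq_of_toricExp_eq_iff (M : Matrix R C ℕ) (N : Matrix R' C ℕ)
    (H : ∀ d d', toricExp M d = toricExp M d' ↔ toricExp N d = toricExp N d') :
    RingHom.ker (toricMap M) = RingHom.ker (toricMap N) := by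
  ext f
  simp only [mem_ker_toricMap_iff, H]

/-- `x` is a rational combination of the rows of `M`, written with the denominator `k` cleared. -/
def InRatRowSpan (M : Matrix R C ℕ) (x : C → ℕ) : Prop :=
  ∃ k : ℤ, k ≠ 0 ∧ ∃ w : R → ℤ, ∀ c, k * x c = ∑ r, w r * M r c

lemma inRatRowSpan_row (M : Matrix R C ℕ) (r : R) : InRatRowSpan M (M r) :=
  ⟨1, one_ne_zero, Pi.single r 1, fun c => by simp [Pi.single_apply]⟩

lemma InRatRowSpan.toricExp_eq {M : Matrix R C ℕ} {x : C → ℕ} (hx : InRatRowSpan M x)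
    {d d' : C →₀ ℕ} (hd : toricExp M d = toricExp M d') :
    (d.sum fun c n => n * x c) = d'.sum fun c n => n * x c := by
  obtain ⟨k, hk, w, hw⟩ := hx
  have key : ∀ e : C →₀ ℕ,
      k * ((e.sum fun c n => n * x c : ℕ) : ℤ) = ∑ r, w r * toricExp M e r := by
    intro e
    simp only [toricExp_apply, Finsupp.sum, Nat.cast_sum, Nat.cast_mul, Finset.mul_sum]
    rw [Finset.sum_comm]
    refine Finset.sum_congr rfl fun c _ => ?_
    rw [mul_left_comm, hw, Finset.mul_sum]
    exact Finset.sum_congr rfl fun r _ => by ring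
  exact_mod_cast mul_left_cancel₀ hk ((key d).trans (hd ▸ (key d').symm))

lemma ker_toricMap_eq_of_inRatRowSpan {M : Matrix R C ℕ} {N : Matrix R' C ℕ}
    (hNM : ∀ r', InRatRowSpan M (N r')) (hMN : ∀ r, InRatRowSpan N (M r)) :
    RingHom.ker (toricMap M) = RingHom.ker (toricMap N) :=
  ker_toricMap_eq_of_toricExp_eq_iff M N fun _ _ =>
    ⟨fun h => Finsupp.ext fun r' => (hNM r').toricExp_eq h,
      fun h => Finsupp.ext fun r => (hMN r).toricExp_eq h⟩

end Toric

namespace RTree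

variable {L : Type} (T : RTree L)

lemma isAnc_iff {v u : T.V} : T.isAnc v u ↔ u = v ∨ T.isAnc v (T.par u) := by
  refine ⟨fun ⟨k, hk⟩ => ?_, ?_⟩
  · cases k with
    | zero => exact Or.inl hk
    | succ k => exact Or.inr ⟨k, hk⟩
  · rintro (h | ⟨k, hk⟩)
    exacts [⟨0, h⟩, ⟨k + 1, hk⟩]

lemma not_isAnc_root {v : T.V} (hv : v ≠ T.leaf T.root) : ¬ T.isAnc v (T.leaf T.root) := by
  rintro ⟨k, hk⟩
  exact hv (hk.symm.trans (Function.iterate_fixed T.par_root k))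

lemma isAnc_leaf_iff {i : L} (hi : i ≠ T.root) {v : T.V} :
    T.isAnc (T.leaf i) v ↔ v = T.leaf i := by
  refine ⟨fun ⟨k, hk⟩ => ?_, fun h => ⟨0, h⟩⟩
  cases k with
  | zero => exact hk
  | succ k =>
    rw [Function.iterate_succ_apply'] at hk
    exact ((T.leaf_iff _ (T.leaf.injective.ne hi)).mp ⟨i, rfl⟩ _ hk).elim

lemma isAnc_of_forall_par_eq_root {u : T.V}
    (hu : ∀ w, w ≠ T.leaf T.root → T.par w = T.leaf T.root → w = u)
    {v : T.V} (hv : v ≠ T.leaf T.root) : T.isAnc u v := by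
  obtain ⟨k, hk⟩ := T.reaches_root v
  induction k generalizing v with
  | zero => exact (hv hk).elim
  | succ k ih =>
    by_cases hpar : T.par v = T.leaf T.root
    · exact ⟨0, hu v hv hpar⟩
    · obtain ⟨k', hk'⟩ := ih hpar hk
      exact ⟨k' + 1, hk'⟩

lemma onPath_comm {v : T.V} {i j : L} : T.onPath v i j ↔ T.onPath v j i :=
  iff_of_eq (xor_comm _ _)

lemma not_onPath_self (v : T.V) (i : L) : ¬ T.onPath v i i :=
  fun h => (xor_self _).mp h

lemma onPath_leaf_iff {k : L} (hk : k ≠ T.root) {i j : L} :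
    T.onPath (T.leaf k) i j ↔ Xor (i = k) (j = k) := by
  show Xor _ _ ↔ _
  simp only [T.isAnc_leaf_iff hk, T.leaf.injective.eq_iff]

lemma onPath_rootChild_iff {u : T.V} (hu_ne : u ≠ T.leaf T.root)
    (hu : ∀ w, w ≠ T.leaf T.root → T.par w = T.leaf T.root → w = u) {i j : L} :
    T.onPath u i j ↔ Xor (i = T.root) (j = T.root) := by
  have hanc : ∀ k, T.isAnc u (T.leaf k) ↔ k ≠ T.root := fun k =>
    ⟨fun h hk => T.not_isAnc_root hu_ne (hk ▸ h),
      fun hk => T.isAnc_of_forall_par_eq_root hu (T.leaf.injective.ne hk)⟩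
  show Xor _ _ ↔ _
  rw [hanc, hanc, xor_not_not]

lemma BmatS_mk (v : T.NR) {i j : L} (h : ¬ (s(i, j) : Sym2 L).IsDiag) :
    BmatS T v ⟨s(i, j), h⟩ = if T.onPath v.1 i j then 1 else 0 := by
  refine if_congr ⟨?_, fun hp => ⟨i, j, rfl, hp⟩⟩ rfl rfl
  rintro ⟨a, b, hab, hp⟩
  rcases Sym2.eq_iff.mp hab with ⟨rfl, rfl⟩ | ⟨rfl, rfl⟩
  exacts [hp, T.onPath_comm.mp hp]

/-- The number of endpoints of the edge `e(v)` that are leaves (its tail can only be the root). -/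
noncomputable def leafEnds (v : T.NR) : ℕ :=
  (if v.1 ∈ Set.range T.leaf then 1 else 0) + (if T.par v.1 = T.leaf T.root then 1 else 0)

lemma sum_leafEnds_mul_BmatS (c : Pairs L) : ∑ v, T.leafEnds v * BmatS T v c = 2 := by
  obtain ⟨c, hc⟩ := c
  induction c using Sym2.ind with | h i j => ?_
  have hij : i ≠ j := fun h => hc (h ▸ Sym2.mk_isDiag_iff.mpr rfl)
  obtain ⟨u, ⟨hu_ne, hu_par⟩, hu⟩ := T.root_unique_child
  have hu' : ∀ w, w ≠ T.leaf T.root → T.par w = T.leaf T.root → w = u :=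
    fun w hw hpar => hu w ⟨hw, hpar⟩
  -- `hits k` is the indicator of the edge at the leaf `k`: `e(k)`, or `e(u)` if `k` is the root
  let hits (k : L) (v : T.NR) : ℕ :=
    (if v.1 = T.leaf k then 1 else 0) + (if v.1 = u ∧ k = T.root then 1 else 0)
  have hsum : ∀ k, ∑ v, hits k v = 1 := by
    intro k
    by_cases hk : k = T.root
    · rw [Fintype.sum_eq_single ⟨u, hu_ne⟩]
      · simp [hits, hk, hu_ne]
      · rintro ⟨v, hv⟩ hvu
        simp_all [hits, Subtype.ext_iff]
    · rw [Fintype.sum_eq_single ⟨T.leaf k, T.leaf.injective.ne hk⟩]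
      · simp [hits, hk]
      · rintro ⟨v, hv⟩ hvk
        simp_all [hits, Subtype.ext_iff]
  have hterm : ∀ v, T.leafEnds v * BmatS T v ⟨s(i, j), hc⟩ = hits i v + hits j v := by
    rintro ⟨v, hv⟩
    rw [leafEnds, BmatS_mk, add_mul]
    have hleaf : (if v ∈ Set.range T.leaf then 1 else 0) * (if T.onPath v i j then 1 else 0)
        = (if v = T.leaf i then 1 else 0) + (if v = T.leaf j then 1 else 0) := by
      by_cases hl : v ∈ Set.range T.leaf
      · obtain ⟨k, rfl⟩ := hl
        have hk : k ≠ T.root := fun h => hv (h ▸ rfl)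
        rw [T.onPath_leaf_iff hk]
        by_cases hik : i = k <;> by_cases hjk : j = k <;> simp_all [eq_comm]
      · have hi : v ≠ T.leaf i := fun h => hl ⟨i, h.symm⟩
        have hj : v ≠ T.leaf j := fun h => hl ⟨j, h.symm⟩
        simp [hl, hi, hj]
    have hroot : (if T.par v = T.leaf T.root then 1 else 0) * (if T.onPath v i j then 1 else 0)
        = (if v = u ∧ i = T.root then 1 else 0) + (if v = u ∧ j = T.root then 1 else 0) := by
      by_cases hpar : T.par v = T.leaf T.root
      · obtain rfl := hu' v hv hpar
        rw [T.onPath_rootChild_iff hu_ne hu']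
        by_cases hi : i = T.root <;> by_cases hj : j = T.root <;> simp_all
      · have hvu : v ≠ u := fun h => hpar (h ▸ hu_par)
        simp [hpar, hvu]
    rw [hleaf, hroot]
    ring
  rw [Finset.sum_congr rfl fun v _ => hterm v, Finset.sum_add_distrib, hsum, hsum]

lemma inRatRowSpan_BmatS_one : InRatRowSpan (BmatS T) fun _ => 1 :=
  ⟨2, two_ne_zero, fun v => T.leafEnds v, fun c => by
    show (2 : ℤ) * 1 = ∑ v, (T.leafEnds v : ℤ) * BmatS T v c
    exact_mod_cast (T.sum_leafEnds_mul_BmatS c).symm⟩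

end RTree

def NewLabels.collapse {L' : Type} {ℓ : L'} {m : ℕ} : NewLabels L' ℓ m → L' :=
  Sum.elim Subtype.val fun _ => ℓ

section AttachStar

variable {L' : Type} (T' : RTree L') (ℓ : L') (hℓ : ℓ ≠ T'.root) (m : ℕ) (hm : 2 ≤ m)

local notation "T" => attachStar T' ℓ hℓ m hm

lemma attachStar_isAnc_inl_inl (w w' : T'.V) :
    (T).isAnc (Sum.inl w) (Sum.inl w') ↔ T'.isAnc w w' :=
  exists_congr fun k => by
    show (AttachAux.newPar T' ℓ m)^[k] (Sum.inl w') = Sum.inl w ↔ _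
    rw [AttachAux.newPar_iter, Sum.inl.injEq]

lemma attachStar_isAnc_inl_leaf (w : T'.V) (i : NewLabels L' ℓ m) :
    (T).isAnc (Sum.inl w) ((T).leaf i) ↔ T'.isAnc w (T'.leaf i.collapse) := by
  rcases i with x | α
  · exact attachStar_isAnc_inl_inl T' ℓ hℓ m hm w _
  · exact (RTree.isAnc_iff _).trans
      ((or_iff_right Sum.inr_ne_inl).trans (attachStar_isAnc_inl_inl T' ℓ hℓ m hm w _))

lemma attachStar_onPath_inl (w : T'.V) (i j : NewLabels L' ℓ m) :
    (T).onPath (Sum.inl w) i j ↔ T'.onPath w i.collapse j.collapse := by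
  show Xor _ _ ↔ Xor _ _
  rw [attachStar_isAnc_inl_leaf, attachStar_isAnc_inl_leaf]

lemma attachStar_inl_ne_root {w : T'.V} (hw : w ≠ T'.leaf T'.root) :
    (Sum.inl w : (T).V) ≠ (T).leaf (T).root :=
  fun h => hw (Sum.inl_injective h)

lemma attachStar_inr_ne_root (α : Fin m) : (Sum.inr α : (T).V) ≠ (T).leaf (T).root :=
  Sum.inr_ne_inl

lemma psiMat_inl_some (w : T'.V) (hw : w ≠ T'.leaf T'.root) :
    psiMat T' ℓ m (Sum.inl (some ⟨w, hw⟩)) =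
      BmatS T ⟨Sum.inl w, attachStar_inl_ne_root T' ℓ hℓ m hm hw⟩ := by
  funext ⟨c, hc⟩
  induction c using Sym2.ind with | h i j => ?_
  simp only [psiMat, Matrix.of_apply]
  rw [RTree.BmatS_mk]
  refine if_congr ?_ rfl rfl
  rw [attachStar_onPath_inl]
  rcases i with x | α <;> rcases j with y | β <;>
    simp [NewLabels.collapse, -Subtype.exists, or_and_right, exists_or,
      T'.not_onPath_self, T'.onPath_comm (i := ℓ)]
  exact T'.onPath_comm.mp

lemma psiMat_inr_zero :
    psiMat T' ℓ m (Sum.inr (some 0)) =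
      BmatS T ⟨Sum.inl (T'.leaf ℓ),
        attachStar_inl_ne_root T' ℓ hℓ m hm (T'.leaf.injective.ne hℓ)⟩ := by
  funext ⟨c, hc⟩
  induction c using Sym2.ind with | h i j => ?_
  simp only [psiMat, Matrix.of_apply]
  rw [RTree.BmatS_mk, if_pos trivial]
  refine if_congr ?_ rfl rfl
  rw [attachStar_onPath_inl, T'.onPath_leaf_iff hℓ]
  rcases i with ⟨x, hx⟩ | α <;> rcases j with ⟨y, hy⟩ | β <;> simp_all [NewLabels.collapse]

lemma psiMat_inr_succ (α : Fin m) :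
    psiMat T' ℓ m (Sum.inr (some α.succ)) =
      BmatS T ⟨Sum.inr α, attachStar_inr_ne_root T' ℓ hℓ m hm α⟩ := by
  funext ⟨c, hc⟩
  induction c using Sym2.ind with | h i j => ?_
  have hij : i ≠ j := fun h => hc (h ▸ Sym2.mk_isDiag_iff.mpr rfl)
  simp only [psiMat, Matrix.of_apply]
  rw [RTree.BmatS_mk, if_neg (Fin.succ_ne_zero α)]
  refine if_congr (.trans ?_ (RTree.onPath_leaf_iff (T) (k := Sum.inr α) Sum.inr_ne_inl).symm)
    rfl rfl
  rw [xor_iff_or_and_not_and, and_iff_left fun h => hij (h.1.trans h.2.symm)]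
  simp [Sym2.mem_iff, eq_comm]

lemma inRatRowSpan_BmatS_psiMat (r : PsiVars T' m) :
    InRatRowSpan (BmatS T) (psiMat T' ℓ m r) := by
  rcases r with (_ | ⟨w, hw⟩) | (_ | β)
  · exact (T).inRatRowSpan_BmatS_one
  · rw [psiMat_inl_some T' ℓ hℓ m hm]
    exact inRatRowSpan_row _ _
  · exact (T).inRatRowSpan_BmatS_one
  · cases β using Fin.cases with
    | zero =>
      rw [psiMat_inr_zero T' ℓ hℓ m hm]
      exact inRatRowSpan_row _ _
    | succ α =>
      rw [psiMat_inr_succ T' ℓ hℓ m hm]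
      exact inRatRowSpan_row _ _

lemma inRatRowSpan_psiMat_BmatS (v : (T).NR) :
    InRatRowSpan (psiMat T' ℓ m) (BmatS T v) := by
  rcases v with ⟨w | α, hv⟩
  · rw [← psiMat_inl_some T' ℓ hℓ m hm w fun h => hv (congrArg Sum.inl h)]
    exact inRatRowSpan_row _ _
  · rw [← psiMat_inr_succ T' ℓ hℓ m hm]
    exact inRatRowSpan_row _ _

end AttachStar

theorem statement11_general {L' : Type} (T' : RTree L')
    (ℓ : L') (hℓ : ℓ ≠ T'.root) (m : ℕ) (hm : 2 ≤ m) :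
    RingHom.ker (toricMap (psiMat T' ℓ m)) =
      RingHom.ker (toricMap (BmatS (attachStar T' ℓ hℓ m hm))) :=
  ker_toricMap_eq_of_inRatRowSpan (inRatRowSpan_psiMat_BmatS T' ℓ hℓ m hm)
    (inRatRowSpan_BmatS_psiMat T' ℓ hℓ m hm)

/-- Let `T'` be a rooted tree, `ℓ` a non-root leaf of `T'`, `m ≥ 2`, and let `T` be
obtained from `T'` by attaching `m` new leaves `l_1, …, l_m` as children of `ℓ`, so that
`ℓ` becomes an internal vertex of `T` of out-degree `m` and
`Lv(T) = (Lv(T') ∖ {ℓ}) ∪ {l_1, …, l_m}`.  Let `ψ` be the `ℂ`-algebra homomorphism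
`ℂ[p_ij : {i,j} ⊆ Lv(T)] → ℂ[s_⋆, s_e (e ∈ E(T')), u_⋆, u_0, u_1, …, u_m]` with
`ψ(p_ij) = s_⋆ u_⋆ ∏_{e ∈ P_{T'}(i,j)} s_e` for `i, j ∈ Lv(T') ∖ {ℓ}`,
`ψ(p_{l_α l_β}) = s_⋆ u_⋆ u_α u_β`, and
`ψ(p_{i,l_α}) = s_⋆ u_⋆ u_0 u_α ∏_{e ∈ P_{T'}(i,ℓ)} s_e`.  Then `ker ψ = ker φ_{B_T}`.
(This expresses the toric ideal `I(B_T)` as the toric fiber product of the toric ideals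
`I(B*_{T'})` and `I(B*_{S_m})`, where `S_m` is the star tree on `m + 1` leaves glued to
`T'` along the edge into `ℓ`.) -/
theorem statement11 {L' : Type} [Fintype L'] [DecidableEq L'] (T' : RTree L')
    (ℓ : L') (hℓ : ℓ ≠ T'.root) (m : ℕ) (hm : 2 ≤ m) :
    RingHom.ker (toricMap (psiMat T' ℓ m)) =
      RingHom.ker (toricMap (BmatS (attachStar T' ℓ hℓ m hm))) :=
  statement11_general T' ℓ hℓ m hm
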